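/- arXiv:1902.01548 — 3 statements merged into one kernel-verified Lean document; each statement's English description precedes it below -/
import Mathlib

section
/- For any r > 0, at every point of the set T_r(2) = {(x,y,u,v) ∈ ℝ⁴ : F(x,y,u,v) = 0 and x² + y² + u² + v² = r²}, the gradient vectors ∇F(x,y,u,v) = (2x, −2y, 3u² − 3v², −6uv) and (x, y, u, v) are linearly independent. -/
/-- On `T_r(2)` the gradients `∇F = (2x, −2y, 3u² − 3v², −6uv)` and the radial
vector `(x,y,u,v)` are linearly independent. -/
theorem gradients_linearly_independent (r : ℝ) (hr : 0 < r)
    (x y u v : ℝ)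
    (hF : x ^ 2 - y ^ 2 + u ^ 3 - 3 * u * v ^ 2 = 0)
    (hG : x ^ 2 + y ^ 2 + u ^ 2 + v ^ 2 = r ^ 2)
    (a b : ℝ)
    (h1 : a * (2 * x) + b * x = 0)
    (h2 : a * (-2 * y) + b * y = 0)
    (h3 : a * (3 * u ^ 2 - 3 * v ^ 2) + b * u = 0)
    (h4 : a * (-6 * u * v) + b * v = 0) :
    a = 0 ∧ b = 0 := by
  have hr2 : (0:ℝ) < r ^ 2 := by positivity
  rcases eq_or_ne x 0 with hx | hx
  · rcases eq_or_ne y 0 with hy | hy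
    · -- x = 0, y = 0
      subst hx; subst hy
      have hF' : u * (u ^ 2 - 3 * v ^ 2) = 0 := by linarith [hF]; 
      rcases eq_or_ne u 0 with hu | hu
      · subst hu
        have hv2 : v ^ 2 > 0 := by nlinarith
        have hv : v ≠ 0 := by
          intro h; rw [h] at hv2; simp at hv2
        have ha : a = 0 := by
          have : a * (3 * 0 ^ 2 - 3 * v ^ 2) + b * 0 = 0 := h3
          have h3' : a * v ^ 2 = 0 := by nlinarith [this]
          rcases mul_eq_zero.mp h3' with h | h
          · exact h
          · exact absurd h (pow_ne_zero 2 hv)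
        refine ⟨ha, ?_⟩
        have : b * v = 0 := by rw [ha] at h4; linarith [h4]
        rcases mul_eq_zero.mp this with h | h
        · exact h
        · exact absurd h hv
      · have huv : u ^ 2 - 3 * v ^ 2 = 0 := by
          rcases mul_eq_zero.mp hF' with h | h
          · exact absurd h hu
          · exact h
        -- h3 becomes u * (2*a*u + b) = 0
        have hb : b = -2 * a * u := by
          have : u * (2 * a * u + b) = 0 := by linear_combination h3 - a * huv
          rcases mul_eq_zero.mp this with h | h
          · exact absurd h hu
          · linarith
        have hv : v ≠ 0 := by
          intro h; rw [h] at huv; nlinarith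
        have h4' : v * (-8 * a * u) = 0 := by
          rw [hb] at h4; linear_combination h4
        have hau : a * u = 0 := by
          rcases mul_eq_zero.mp h4' with h | h
          · exact absurd h hv
          · linarith
        have ha : a = 0 := by
          rcases mul_eq_zero.mp hau with h | h
          · exact h
          · exact absurd h hu
        exact ⟨ha, by rw [hb, ha]; ring⟩
    · -- x = 0, y ≠ 0
      subst hx
      have hb : b = 2 * a := by
        have : y * (b - 2 * a) = 0 := by linarith [h2]
        rcases mul_eq_zero.mp this with h | h
        · exact absurd h hy
        · linarith
      have ha : a = 0 := by
        by_contra ha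
        have e1 : 3 * u ^ 2 - 3 * v ^ 2 + 2 * u = 0 := by
          have : a * (3 * u ^ 2 - 3 * v ^ 2 + 2 * u) = 0 := by rw [hb] at h3; linarith
          rcases mul_eq_zero.mp this with h | h
          · exact absurd h ha
          · exact h
        have e2 : v * (1 - 3 * u) = 0 := by
          have : a * (v * (1 - 3 * u)) = 0 := by rw [hb] at h4; linear_combination h4 / 2
          rcases mul_eq_zero.mp this with h | h
          · exact absurd h ha
          · exact h
        have hy2 : y ^ 2 > 0 := by positivity
        rcases mul_eq_zero.mp e2 with hv | hu
        · subst hv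
          have e3 : 3 * u ^ 3 + 2 * u ^ 2 = 0 := by nlinarith [e1]
          nlinarith [hF, e3, hy2]
        · have hu' : u = 1 / 3 := by linarith
          subst hu'
          nlinarith [e1, hF, hy2]
      exact ⟨ha, by rw [hb, ha]; ring⟩
  · rcases eq_or_ne y 0 with hy | hy
    · -- x ≠ 0, y = 0
      subst hy
      have hb : b = -2 * a := by
        have : x * (2 * a + b) = 0 := by linarith [h1]
        rcases mul_eq_zero.mp this with h | h
        · exact absurd h hx
        · linarith
      have ha : a = 0 := by
        by_contra ha
        have e1 : 3 * u ^ 2 - 3 * v ^ 2 - 2 * u = 0 := by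
          have : a * (3 * u ^ 2 - 3 * v ^ 2 - 2 * u) = 0 := by rw [hb] at h3; linarith
          rcases mul_eq_zero.mp this with h | h
          · exact absurd h ha
          · exact h
        have e2 : v * (3 * u + 1) = 0 := by
          have : a * (v * (3 * u + 1)) = 0 := by rw [hb] at h4; linear_combination -h4 / 2
          rcases mul_eq_zero.mp this with h | h
          · exact absurd h ha
          · linarith
        have hx2 : x ^ 2 > 0 := by positivity
        rcases mul_eq_zero.mp e2 with hv | hu
        · subst hv
          have e3 : 3 * u ^ 3 - 2 * u ^ 2 = 0 := by nlinarith [e1]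
          nlinarith [hF, e3, hx2]
        · have hu' : u = -(1 / 3) := by linarith
          subst hu'
          nlinarith [e1, hF, hx2]
      exact ⟨ha, by rw [hb, ha]; ring⟩
    · -- x ≠ 0, y ≠ 0
      have hb1 : b = -2 * a := by
        have : x * (2 * a + b) = 0 := by linarith [h1]
        rcases mul_eq_zero.mp this with h | h
        · exact absurd h hx
        · linarith
      have hb2 : b = 2 * a := by
        have : y * (b - 2 * a) = 0 := by linarith [h2]
        rcases mul_eq_zero.mp this with h | h
        · exact absurd h hy
        · linarith
      constructor <;> linarith
end

section
/- For any r > 0, the set T_r(2) = F⁻¹(0) ∩ G_r⁻¹(0) is a smooth 2-dimensional submanifold of ℝ⁴. -/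
open ContinuousLinearMap in
lemma surj_of_det_ne_zero (L : (ℝ × ℝ × ℝ × ℝ) →L[ℝ] ℝ × ℝ)
    (w w' : ℝ × ℝ × ℝ × ℝ)
    (h : (L w).1 * (L w').2 - (L w').1 * (L w).2 ≠ 0) :
    Function.Surjective L := by
  intro z
  set d := (L w).1 * (L w').2 - (L w').1 * (L w).2 with hd
  refine ⟨((z.1 * (L w').2 - z.2 * (L w').1) / d) • w
        + ((z.2 * (L w).1 - z.1 * (L w).2) / d) • w', ?_⟩
  have heq : L (((z.1 * (L w').2 - z.2 * (L w').1) / d) • w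
        + ((z.2 * (L w).1 - z.1 * (L w).2) / d) • w')
      = ((z.1 * (L w').2 - z.2 * (L w').1) / d) • L w
        + ((z.2 * (L w).1 - z.1 * (L w).2) / d) • L w' := by
    simp [map_add, map_smul]
  rw [heq]
  ext
  · simp only [Prod.fst_add, Prod.smul_fst, smul_eq_mul]
    field_simp
    ring
  · simp only [Prod.snd_add, Prod.smul_snd, smul_eq_mul]
    field_simp
    ring

set_option maxHeartbeats 1000000 in
/-- `T_r(2) = F⁻¹(0) ∩ G_r⁻¹(0)` is a smooth 2-dimensional submanifold of `ℝ⁴`: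
near each of its points it is the zero set of a smooth map to `ℝ²` with
surjective derivative (codimension-2 regular level set). -/
theorem Tr2_smooth_surface (r : ℝ) (hr : 0 < r) :
    ∀ p ∈ {q : ℝ × ℝ × ℝ × ℝ |
        q.1 ^ 2 - q.2.1 ^ 2 + q.2.2.1 ^ 3 - 3 * q.2.2.1 * q.2.2.2 ^ 2 = 0 ∧
        q.1 ^ 2 + q.2.1 ^ 2 + q.2.2.1 ^ 2 + q.2.2.2 ^ 2 = r ^ 2},
      ∃ f : (ℝ × ℝ × ℝ × ℝ) → (ℝ × ℝ), ∃ U ∈ nhds p,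
        ContDiff ℝ (⊤ : ℕ∞) f ∧
        Function.Surjective (fderiv ℝ f p) ∧
        (∀ q ∈ U, (q ∈ {q : ℝ × ℝ × ℝ × ℝ |
            q.1 ^ 2 - q.2.1 ^ 2 + q.2.2.1 ^ 3 - 3 * q.2.2.1 * q.2.2.2 ^ 2 = 0 ∧
            q.1 ^ 2 + q.2.1 ^ 2 + q.2.2.1 ^ 2 + q.2.2.2 ^ 2 = r ^ 2}) ↔ f q = 0) := by
  rintro ⟨x, y, u, v⟩ ⟨hF, hG⟩
  simp only at hF hG
  refine ⟨fun q => (q.1 ^ 2 - q.2.1 ^ 2 + q.2.2.1 ^ 3 - 3 * q.2.2.1 * q.2.2.2 ^ 2,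
      q.1 ^ 2 + q.2.1 ^ 2 + q.2.2.1 ^ 2 + q.2.2.2 ^ 2 - r ^ 2), Set.univ,
      Filter.univ_mem, ?_, ?_, ?_⟩
  · fun_prop
  · -- derivative computation
    set p : ℝ × ℝ × ℝ × ℝ := (x, y, u, v) with hp
    have hx : HasFDerivAt (fun q : ℝ × ℝ × ℝ × ℝ => q.1)
        (ContinuousLinearMap.fst ℝ ℝ (ℝ×ℝ×ℝ)) p := hasFDerivAt_fst
    have hy : HasFDerivAt (fun q : ℝ × ℝ × ℝ × ℝ => q.2.1)
        ((ContinuousLinearMap.fst ℝ ℝ (ℝ×ℝ)).comp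
          ((ContinuousLinearMap.snd ℝ ℝ (ℝ×ℝ×ℝ)))) p :=
      hasFDerivAt_fst.comp p hasFDerivAt_snd
    have hu : HasFDerivAt (fun q : ℝ × ℝ × ℝ × ℝ => q.2.2.1)
        ((ContinuousLinearMap.fst ℝ ℝ ℝ).comp
          ((ContinuousLinearMap.snd ℝ ℝ (ℝ×ℝ)).comp
            (ContinuousLinearMap.snd ℝ ℝ (ℝ×ℝ×ℝ)))) p :=
      hasFDerivAt_fst.comp p (hasFDerivAt_snd.comp p hasFDerivAt_snd)
    have hv : HasFDerivAt (fun q : ℝ × ℝ × ℝ × ℝ => q.2.2.2)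
        ((ContinuousLinearMap.snd ℝ ℝ ℝ).comp
          ((ContinuousLinearMap.snd ℝ ℝ (ℝ×ℝ)).comp
            (ContinuousLinearMap.snd ℝ ℝ (ℝ×ℝ×ℝ)))) p :=
      hasFDerivAt_snd.comp p (hasFDerivAt_snd.comp p hasFDerivAt_snd)
    have h1 := (((hx.mul hx).sub (hy.mul hy)).add (hu.mul (hu.mul hu))).sub
      ((hu.mul (hv.mul hv)).const_mul 3)
    have h2 := ((((hx.mul hx).add (hy.mul hy)).add (hu.mul hu)).add (hv.mul hv)).sub_const (r^2)
    have key1 : (fun q : ℝ × ℝ × ℝ × ℝ =>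
          q.1 ^ 2 - q.2.1 ^ 2 + q.2.2.1 ^ 3 - 3 * q.2.2.1 * q.2.2.2 ^ 2)
        = (fun q : ℝ × ℝ × ℝ × ℝ =>
          q.1 * q.1 - q.2.1 * q.2.1 + q.2.2.1 * (q.2.2.1 * q.2.2.1)
            - 3 * (q.2.2.1 * (q.2.2.2 * q.2.2.2))) := by
      funext q; ring
    have key2 : (fun q : ℝ × ℝ × ℝ × ℝ =>
          q.1 ^ 2 + q.2.1 ^ 2 + q.2.2.1 ^ 2 + q.2.2.2 ^ 2 - r ^ 2)
        = (fun q : ℝ × ℝ × ℝ × ℝ =>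
          q.1 * q.1 + q.2.1 * q.2.1 + q.2.2.1 * q.2.2.1 + q.2.2.2 * q.2.2.2 - r ^ 2) := by
      funext q; ring
    simp only [Pi.mul_def, Pi.sub_def, Pi.add_def] at h1 h2
    rw [← key1] at h1
    rw [← key2] at h2
    have hfd := (HasFDerivAt.prodMk h1 h2).fderiv
    set L := _root_.fderiv ℝ (fun q : ℝ × ℝ × ℝ × ℝ =>
      (q.1 ^ 2 - q.2.1 ^ 2 + q.2.2.1 ^ 3 - 3 * q.2.2.1 * q.2.2.2 ^ 2,
        q.1 ^ 2 + q.2.1 ^ 2 + q.2.2.1 ^ 2 + q.2.2.2 ^ 2 - r ^ 2)) p with hLdef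
    -- evaluations at the four basis vectors
    have e1 : L (1,0,0,0) = (2*x, 2*x) := by
      rw [hfd]; ext <;> simp [hp] <;> ring
    have e2 : L (0,1,0,0) = (-(2*y), 2*y) := by
      rw [hfd]; ext <;> simp [hp] <;> ring
    have e3 : L (0,0,1,0) = (3*u^2 - 3*v^2, 2*u) := by
      rw [hfd]; ext <;> simp [hp] <;> ring
    have e4 : L (0,0,0,1) = (-(6*u*v), 2*v) := by
      rw [hfd]; ext <;> simp [hp] <;> ring
    clear hfd h1 h2 hx hy hu hv key1 key2
    by_cases hx0 : x = 0
    · by_cases hy0 : y = 0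
      · -- x = 0, y = 0 : use e3, e4 ; det = 6v(3u² - v²)
        have hv0 : v ≠ 0 := by
          intro h0
          rw [hx0, hy0, h0] at hF hG
          have hu3 : u ^ 3 = 0 := by linarith [hF]
          have hu0 : u = 0 := by
            exact pow_eq_zero_iff (n := 3) (by norm_num) |>.1 hu3
          rw [hu0] at hG
          nlinarith [hG, hr]
        have h3u : 3*u^2 - v^2 ≠ 0 := by
          intro h0
          rw [hx0, hy0] at hF
          have hu3 : u ^ 3 = 0 := by linear_combination (-1/8 : ℝ) * hF + (3*u/8) * h0
          have hu0 : u = 0 := pow_eq_zero_iff (n := 3) (by norm_num) |>.1 hu3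
          rw [hu0] at h0
          have : v = 0 := by nlinarith [h0]
          exact hv0 this
        apply surj_of_det_ne_zero L (0,0,1,0) (0,0,0,1)
        rw [e3, e4]
        intro h0
        have h6 : v * (3*u^2 - v^2) = 0 := by linear_combination h0 / 6
        rcases mul_eq_zero.1 h6 with h | h
        · exact hv0 h
        · exact h3u h
      · -- x = 0, y ≠ 0
        have hy2 : 0 < y^2 := (sq_nonneg y).lt_of_ne' (pow_ne_zero 2 hy0)
        by_cases hc : 2*u + 3*u^2 - 3*v^2 = 0
        · -- use e2 and e4 ; det = 4yv(3u - 1)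
          apply surj_of_det_ne_zero L (0,1,0,0) (0,0,0,1)
          rw [e2, e4]
          intro h0
          have hfac : y * (v * (3*u - 1)) = 0 := by linear_combination h0 / 4
          rcases mul_eq_zero.1 hfac with h | h
          · exact hy0 h
          · rcases mul_eq_zero.1 h with h' | h'
            · -- v = 0 : 2u + 3u² = 0 and -y² + u³ = 0
              rw [hx0, h'] at hF
              rw [h'] at hc
              have hu_le : u^3 ≤ 0 := by
                nlinarith [sq_nonneg u, sq_nonneg (u*u), hc]
              nlinarith [hF, hy2, hu_le]
            · -- u = 1/3 : v² = 1/3 and then -y² - 8/27 = 0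
              have hu13 : u = 1/3 := by linarith
              rw [hu13] at hc
              have hv2 : v^2 = 1/3 := by nlinarith [hc]
              rw [hx0, hu13] at hF
              nlinarith [hF, hv2, hy2]
        · -- use e2 and e3 ; det = -2y(2u + 3u² - 3v²)
          apply surj_of_det_ne_zero L (0,1,0,0) (0,0,1,0)
          rw [e2, e3]
          intro h0
          have hfac : y * (2*u + 3*u^2 - 3*v^2) = 0 := by linear_combination -h0 / 2
          rcases mul_eq_zero.1 hfac with h | h
          · exact hy0 h
          · exact hc h
    · -- x ≠ 0
      have hx2 : 0 < x^2 := (sq_nonneg x).lt_of_ne' (pow_ne_zero 2 hx0)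
      by_cases hy0 : y = 0
      · by_cases hc : 2*u - 3*u^2 + 3*v^2 = 0
        · -- use e1 and e4 ; det = 4xv(1 + 3u)
          apply surj_of_det_ne_zero L (1,0,0,0) (0,0,0,1)
          rw [e1, e4]
          intro h0
          have hfac : x * (v * (1 + 3*u)) = 0 := by linear_combination h0 / 4
          rcases mul_eq_zero.1 hfac with h | h
          · exact hx0 h
          · rcases mul_eq_zero.1 h with h' | h'
            · -- v = 0 : 2u - 3u² = 0 and x² + u³ = 0
              rw [hy0, h'] at hF
              rw [h'] at hc
              have hu_ge : 0 ≤ u^3 := by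
                nlinarith [sq_nonneg u, sq_nonneg (u*u), hc]
              nlinarith [hF, hx2, hu_ge]
            · -- u = -1/3 : v² = 1/3 and then x² + 8/27 = 0
              have hu13 : u = -(1/3) := by linarith
              rw [hu13] at hc
              have hv2 : v^2 = 1/3 := by nlinarith [hc]
              rw [hy0, hu13] at hF
              nlinarith [hF, hv2, hx2]
        · -- use e1 and e3 ; det = 2x(2u - 3u² + 3v²)
          apply surj_of_det_ne_zero L (1,0,0,0) (0,0,1,0)
          rw [e1, e3]
          intro h0
          have hfac : x * (2*u - 3*u^2 + 3*v^2) = 0 := by linear_combination h0 / 2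
          rcases mul_eq_zero.1 hfac with h | h
          · exact hx0 h
          · exact hc h
      · -- x ≠ 0, y ≠ 0 : use e1, e2 ; det = 8xy
        apply surj_of_det_ne_zero L (1,0,0,0) (0,1,0,0)
        rw [e1, e2]
        intro h0
        have hfac : x * y = 0 := by linear_combination h0 / 8
        rcases mul_eq_zero.1 hfac with h | h
        · exact hx0 h
        · exact hy0 h
  · intro q _
    simp only [Set.mem_setOf_eq, Prod.mk_eq_zero, sub_eq_zero]
end

section
/- There is no point (x,y,u,v) ∈ ℝ⁴ with x ≠ 0, y = 0, v ≠ 0 satisfying simultaneously the eigenvector equation (2x, −2y, 3u²−3v², −6uv) = λ(x,y,u,v) for some nonzero real λ, F(x,y,u,v) = 0, and x² + y² + u² + v² = r² for r > 0. In particular, from λ = 2 one deduces u = −1/3, v² = 1/3, x² = r² − 4/9, and then F = 0 forces x² < 0, a contradiction. -/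
/-- There is no point with `x ≠ 0`, `y = 0`, `v ≠ 0` on `T_r(2)` where the gradient
of `F` is a nonzero multiple of the radial vector. -/
theorem no_dependent_point (r : ℝ) (hr : 0 < r) (x y u v lam : ℝ)
    (hx : x ≠ 0) (hy : y = 0) (hv : v ≠ 0) (hlam : lam ≠ 0)
    (e1 : 2 * x = lam * x) (e2 : -2 * y = lam * y)
    (e3 : 3 * u ^ 2 - 3 * v ^ 2 = lam * u) (e4 : -6 * u * v = lam * v)
    (hF : x ^ 2 - y ^ 2 + u ^ 3 - 3 * u * v ^ 2 = 0)
    (hG : x ^ 2 + y ^ 2 + u ^ 2 + v ^ 2 = r ^ 2) :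
    False := by
  have hl : lam = 2 := by
    have := mul_right_cancel₀ hx (e1.symm.trans rfl)
    linarith [mul_right_cancel₀ hx e1.symm]
  subst hl hy
  have hu : u = -1/3 := by
    have := mul_right_cancel₀ hv (show (-6 * u) * v = 2 * v by linarith [e4])
    linarith
  subst hu
  have hv2 : v ^ 2 = 1/3 := by nlinarith [e3]
  nlinarith [sq_nonneg x, hF, hv2]
end
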